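/- Let G and H be connected finite simple graphs of order n₁ ≥ 2 and n₂ ≥ 2, with maximum degrees Δ₁ and Δ₂, respectively. If Δ₁ = n₁ − 1 and Δ₂ = n₂ − 1, then dim_s(G + H) = dim_s(G) + dim_s(H) + 1. -/

import Mathlib

open SimpleGraph

/-- A vertex `w` strongly resolves the pair `u`, `v` if `v` lies on some shortest `u`–`w`
path or `u` lies on some shortest `v`–`w` path. -/
def StronglyResolves {V : Type*} (G : SimpleGraph V) (w u v : V) : Prop :=
  G.dist u w = G.dist u v + G.dist v w ∨ G.dist v w = G.dist v u + G.dist u w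

/-- `S` is a strong resolving set for `G` if every pair of distinct vertices is strongly
resolved by some vertex of `S`. -/
def IsStrongResolvingSet {V : Type*} (G : SimpleGraph V) (S : Set V) : Prop :=
  ∀ u v : V, u ≠ v → ∃ w ∈ S, StronglyResolves G w u v

/-- The strong metric dimension: the minimum cardinality of a strong resolving set. -/
noncomputable def strongDim {V : Type*} (G : SimpleGraph V) [Fintype V] : ℕ :=
  sInf {k | ∃ S : Finset V, IsStrongResolvingSet G ↑S ∧ S.card = k}

/-- The closed neighborhood of a vertex. -/
def closedNbhd {V : Type*} (G : SimpleGraph V) (v : V) : Set V :=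
  insert v (G.neighborSet v)

/-- A twin-free clique: a clique containing no pair of true twins. -/
def IsTwinFreeClique {V : Type*} (G : SimpleGraph V) (X : Finset V) : Prop :=
  G.IsClique ↑X ∧ ∀ u ∈ X, ∀ v ∈ X, u ≠ v → closedNbhd G u ≠ closedNbhd G v

/-- The twin-free clique number: maximum cardinality of a twin-free clique. -/
noncomputable def twinFreeCliqueNum {V : Type*} (G : SimpleGraph V) [Fintype V] : ℕ :=
  sSup {k | ∃ X : Finset V, IsTwinFreeClique G X ∧ X.card = k}

/-- Adjacency relation of the join of two graphs. -/
def joinAdj {V W : Type*} (G : SimpleGraph V) (H : SimpleGraph W) :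
    V ⊕ W → V ⊕ W → Prop
  | Sum.inl a, Sum.inl b => G.Adj a b
  | Sum.inr a, Sum.inr b => H.Adj a b
  | Sum.inl _, Sum.inr _ => True
  | Sum.inr _, Sum.inl _ => True

/-- The join `G + H`: disjoint union of `G` and `H` plus all edges between them. -/
def joinGraph {V W : Type*} (G : SimpleGraph V) (H : SimpleGraph W) :
    SimpleGraph (V ⊕ W) where
  Adj := joinAdj G H
  symm := by
    constructor
    rintro (a | a) (b | b) h
    · exact G.adj_symm h
    · trivial
    · trivial
    · exact H.adj_symm h
  loopless := by
    constructor
    rintro (a | a) h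
    · exact G.loopless.irrefl a h
    · exact H.loopless.irrefl a h

/-- Adjacency relation of the corona product `G ⊙ H`. -/
def coronaAdj {V W : Type*} (G : SimpleGraph V) (H : SimpleGraph W) :
    V ⊕ V × W → V ⊕ V × W → Prop
  | Sum.inl a, Sum.inl b => G.Adj a b
  | Sum.inr p, Sum.inr q => p.1 = q.1 ∧ H.Adj p.2 q.2
  | Sum.inl a, Sum.inr q => a = q.1
  | Sum.inr p, Sum.inl b => p.1 = b

/-- The corona product `G ⊙ H`: one copy of `G` and one copy of `H` for each vertex of
`G`, with the `i`-th vertex of `G` joined to every vertex of the `i`-th copy of `H`. -/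
def corona {V W : Type*} (G : SimpleGraph V) (H : SimpleGraph W) :
    SimpleGraph (V ⊕ V × W) where
  Adj := coronaAdj G H
  symm := by
    constructor
    rintro (a | p) (b | q) h
    · exact G.adj_symm h
    · exact h.symm
    · exact h.symm
    · exact ⟨h.1.symm, H.adj_symm h.2⟩
  loopless := by
    constructor
    rintro (a | p) h
    · exact G.loopless.irrefl a h
    · exact H.loopless.irrefl p.2 h.2

/-- The disjoint union of copies of `H`, one copy for each element of `V`. -/
def copies (V : Type*) {W : Type*} (H : SimpleGraph W) : SimpleGraph (V × W) where
  Adj p q := p.1 = q.1 ∧ H.Adj p.2 q.2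
  symm := ⟨fun _ _ h => ⟨h.1.symm, h.2.symm⟩⟩
  loopless := ⟨fun p h => H.loopless.irrefl p.2 h.2⟩

/-- The algebraic connectivity: the second smallest eigenvalue (with multiplicity,
in nondecreasing order) of the Laplacian matrix. -/
noncomputable def algebraicConnectivity {V : Type*} (G : SimpleGraph V) [Fintype V]
    [DecidableEq V] [DecidableRel G.Adj] : ℝ :=
  (((Finset.univ.val.map ((G.posSemidef_lapMatrix ℝ).isHermitian.eigenvalues)).sort
    (· ≤ ·)).getD 1 0)

/-!
In a graph of diameter at most two, a vertex other than `u`, `v` strongly resolves them only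
when `u`, `v` are adjacent and it lies in exactly one of their closed neighbourhoods. Hence a
set is strongly resolving exactly when its complement is a twin-free clique, and
`dim_s(G) = n - ω_tf(G)`. A universal vertex (degree `n - 1`) puts `G`, `H` and `G + H` in
diameter two. Universal vertices are twins of each other, so a twin-free clique contains at
most one, and a maximum one contains exactly one when the graph has one. The twin-free cliques
of `G + H` are the unions of twin-free cliques of `G` and `H` that do not both contain a
universal vertex, so `ω_tf(G + H) = ω_tf(G) + ω_tf(H) - 1`.
-/

section StrongMetricDimension

variable {V W : Type*} {G : SimpleGraph V} {H : SimpleGraph W}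

section Diameter

variable {u v w : V}

lemma stronglyResolves_left (G : SimpleGraph V) (u v : V) : StronglyResolves G u u v :=
  Or.inr (by simp)

lemma stronglyResolves_right (G : SimpleGraph V) (u v : V) : StronglyResolves G v u v :=
  Or.inl (by simp)

lemma dist_eq_two_of_ediam_le_two (h : G.ediam ≤ 2) (huv : u ≠ v) (hadj : ¬G.Adj u v) :
    G.dist u v = 2 := by
  have hle : G.edist u v ≤ 2 := ediam_le_iff.1 h u v
  have hr : G.Reachable u v := edist_ne_top_iff_reachable.1 (ne_top_of_le_ne_top (by decide) hle)
  have h1 := hr.one_lt_dist_of_ne_of_not_adj huv hadj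
  have h2 : G.dist u v ≤ 2 := by exact_mod_cast hr.coe_dist_eq_edist ▸ hle
  omega

lemma stronglyResolves_iff_of_ediam_le_two (h : G.ediam ≤ 2) (huv : u ≠ v) (hwu : w ≠ u)
    (hwv : w ≠ v) : StronglyResolves G w u v ↔ G.Adj u v ∧ Xor (G.Adj u w) (G.Adj v w) := by
  have hdist : ∀ {x y}, x ≠ y → G.dist x y = 1 ∧ G.Adj x y ∨ G.dist x y = 2 ∧ ¬G.Adj x y :=
    fun {x y} hxy => (em (G.Adj x y)).imp (fun hadj => ⟨dist_eq_one_iff_adj.2 hadj, hadj⟩)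
      (fun hadj => ⟨dist_eq_two_of_ediam_le_two h hxy hadj, hadj⟩)
  rw [StronglyResolves, dist_comm (u := v) (v := u)]
  rcases hdist huv with ⟨h₁, a₁⟩ | ⟨h₁, a₁⟩ <;> rcases hdist hwu.symm with ⟨h₂, a₂⟩ | ⟨h₂, a₂⟩ <;>
    rcases hdist hwv.symm with ⟨h₃, a₃⟩ | ⟨h₃, a₃⟩ <;> simp [*]

lemma closedNbhd_eq_closedNbhd_iff_of_adj (huv : G.Adj u v) :
    closedNbhd G u = closedNbhd G v ↔ ∀ w, w ≠ u → w ≠ v → (G.Adj u w ↔ G.Adj v w) := by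
  simp only [Set.ext_iff, closedNbhd, Set.mem_insert_iff, mem_neighborSet]
  refine ⟨fun h w hwu hwv => by simpa [hwu, hwv] using h w, fun h w => ?_⟩
  by_cases hwu : w = u
  · simp [hwu, huv.symm]
  by_cases hwv : w = v
  · simp [hwv, huv]
  simp [hwu, hwv, h w hwu hwv]

lemma isStrongResolvingSet_compl_iff (h : G.ediam ≤ 2) (X : Finset V) :
    IsStrongResolvingSet G (↑X)ᶜ ↔ IsTwinFreeClique G X := by
  constructor
  · intro hS
    have key : ∀ u ∈ X, ∀ v ∈ X, u ≠ v → G.Adj u v ∧ closedNbhd G u ≠ closedNbhd G v := by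
      intro u hu v hv huv
      obtain ⟨w, hw, hres⟩ := hS u v huv
      have hwu : w ≠ u := by rintro rfl; exact hw hu
      have hwv : w ≠ v := by rintro rfl; exact hw hv
      obtain ⟨hadj, hxor⟩ := (stronglyResolves_iff_of_ediam_le_two h huv hwu hwv).1 hres
      refine ⟨hadj, fun htwin => ?_⟩
      have := (closedNbhd_eq_closedNbhd_iff_of_adj hadj).1 htwin w hwu hwv
      exact (xor_iff_not_iff _ _).1 hxor this
    exact ⟨fun u hu v hv huv => (key u hu v hv huv).1, fun u hu v hv huv => (key u hu v hv huv).2⟩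
  · rintro ⟨hclique, htwin⟩ u v huv
    by_cases hu : u ∉ X
    · exact ⟨u, hu, stronglyResolves_left G u v⟩
    by_cases hv : v ∉ X
    · exact ⟨v, hv, stronglyResolves_right G u v⟩
    rw [not_not] at hu hv
    have hadj : G.Adj u v := hclique hu hv huv
    obtain ⟨w, hwu, hwv, hw⟩ : ∃ w, w ≠ u ∧ w ≠ v ∧ ¬(G.Adj u w ↔ G.Adj v w) := by
      simpa using mt (closedNbhd_eq_closedNbhd_iff_of_adj hadj).2 (htwin u hu v hv huv)
    refine ⟨w, fun hwX => hw ?_, ?_⟩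
    · exact iff_of_true (hclique hu hwX hwu.symm) (hclique hv hwX hwv.symm)
    · exact (stronglyResolves_iff_of_ediam_le_two h huv hwu hwv).2 ⟨hadj, (xor_iff_not_iff _ _).2 hw⟩

end Diameter

section Extremal

variable [Fintype V]

lemma strongDim_le {S : Finset V} (hS : IsStrongResolvingSet G S) : strongDim G ≤ S.card :=
  Nat.sInf_le ⟨S, hS, rfl⟩

lemma exists_isStrongResolvingSet_card_eq_strongDim (G : SimpleGraph V) :
    ∃ S : Finset V, IsStrongResolvingSet G S ∧ S.card = strongDim G :=
  Nat.sInf_mem (s := {k | ∃ S : Finset V, IsStrongResolvingSet G S ∧ S.card = k})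
    ⟨_, Finset.univ, fun u v _ => ⟨u, by simp, stronglyResolves_left G u v⟩, rfl⟩

lemma bddAbove_twinFreeClique_card (G : SimpleGraph V) :
    BddAbove {k | ∃ X : Finset V, IsTwinFreeClique G X ∧ X.card = k} :=
  ⟨Fintype.card V, by rintro _ ⟨X, -, rfl⟩; exact X.card_le_univ⟩

lemma IsTwinFreeClique.card_le {X : Finset V} (hX : IsTwinFreeClique G X) :
    X.card ≤ twinFreeCliqueNum G :=
  le_csSup (bddAbove_twinFreeClique_card G) ⟨X, hX, rfl⟩

lemma exists_isTwinFreeClique_card_eq_twinFreeCliqueNum (G : SimpleGraph V) :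
    ∃ X : Finset V, IsTwinFreeClique G X ∧ X.card = twinFreeCliqueNum G :=
  Nat.sSup_mem (s := {k | ∃ X : Finset V, IsTwinFreeClique G X ∧ X.card = k})
    ⟨0, ∅, ⟨by simp, by simp⟩, rfl⟩ (bddAbove_twinFreeClique_card G)

lemma strongDim_add_twinFreeCliqueNum (h : G.ediam ≤ 2) :
    strongDim G + twinFreeCliqueNum G = Fintype.card V := by
  classical
  obtain ⟨S, hS, hScard⟩ := exists_isStrongResolvingSet_card_eq_strongDim G
  obtain ⟨X, hX, hXcard⟩ := exists_isTwinFreeClique_card_eq_twinFreeCliqueNum G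
  have hSc : IsTwinFreeClique G Sᶜ :=
    (isStrongResolvingSet_compl_iff h Sᶜ).1 (by rwa [Finset.coe_compl, compl_compl])
  have hXc : IsStrongResolvingSet G ↑Xᶜ := by
    rw [Finset.coe_compl]; exact (isStrongResolvingSet_compl_iff h X).2 hX
  have := S.card_add_card_compl
  have := X.card_add_card_compl
  have := hSc.card_le
  have := strongDim_le hXc
  omega

end Extremal

section Universal

lemma closedNbhd_eq_univ_iff {v : V} : closedNbhd G v = Set.univ ↔ G.IsUniversal v :=
  insert_neighborSet_eq_univ

lemma SimpleGraph.IsUniversal.ediam_le_two {c : V} (hc : G.IsUniversal c) : G.ediam ≤ 2 := by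
  have hle : ∀ u, G.edist c u ≤ 1 := fun u =>
    edist_le_one_iff_adj_or_eq.2 ((eq_or_ne c u).elim Or.inr (fun h => Or.inl (hc h)))
  refine ediam_le_of_edist_le fun u v => ?_
  calc G.edist u v ≤ G.edist u c + G.edist c v := G.edist_triangle
    _ ≤ 1 + 1 := add_le_add (edist_comm ▸ hle u) (hle v)
    _ = 2 := one_add_one_eq_two

lemma exists_isUniversal_of_maxDegree_eq [Fintype V] [Nonempty V] [DecidableRel G.Adj]
    (h : G.maxDegree = Fintype.card V - 1) : ∃ v, G.IsUniversal v :=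
  let ⟨v, hv⟩ := G.exists_maximal_degree_vertex
  ⟨v, (G.degree_eq_card_sub_one v).1 (hv ▸ h)⟩

lemma IsTwinFreeClique.subset {X Y : Finset V} (hY : IsTwinFreeClique G Y) (hXY : X ⊆ Y) :
    IsTwinFreeClique G X :=
  ⟨hY.1.subset (Finset.coe_subset.2 hXY), fun u hu v hv => hY.2 u (hXY hu) v (hXY hv)⟩

lemma IsTwinFreeClique.insert_of_isUniversal [DecidableEq V] {X : Finset V} {c : V}
    (hX : IsTwinFreeClique G X) (hc : G.IsUniversal c) (hfree : ∀ u ∈ X, ¬G.IsUniversal u) :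
    IsTwinFreeClique G (insert c X) := by
  refine ⟨?_, ?_⟩
  · rw [Finset.coe_insert]
    exact hX.1.insert fun u _ hcu => hc hcu
  · have htwin : ∀ u ∈ X, closedNbhd G c ≠ closedNbhd G u := fun u hu h =>
      hfree u hu (closedNbhd_eq_univ_iff.1 (h ▸ closedNbhd_eq_univ_iff.2 hc))
    simp only [Finset.mem_insert]
    rintro u (rfl | hu) v (rfl | hv) huv
    · exact absurd rfl huv
    · exact htwin v hv
    · exact (htwin u hu).symm
    · exact hX.2 u hu v hv huv

lemma IsTwinFreeClique.card_lt_twinFreeCliqueNum [Fintype V] {X : Finset V} {c : V}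
    (hX : IsTwinFreeClique G X) (hc : G.IsUniversal c) (hfree : ∀ u ∈ X, ¬G.IsUniversal u) :
    X.card < twinFreeCliqueNum G := by
  classical
  have hcX : c ∉ X := fun h => hfree c h hc
  calc X.card < (insert c X).card := by rw [Finset.card_insert_of_notMem hcX]; omega
    _ ≤ twinFreeCliqueNum G := (hX.insert_of_isUniversal hc hfree).card_le

lemma exists_isTwinFreeClique_card_eq_twinFreeCliqueNum_of_isUniversal [Fintype V] {c : V}
    (hc : G.IsUniversal c) : ∃ X : Finset V, IsTwinFreeClique G X ∧
      X.card = twinFreeCliqueNum G ∧ ∃ v ∈ X, G.IsUniversal v := by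
  obtain ⟨X, hX, hcard⟩ := exists_isTwinFreeClique_card_eq_twinFreeCliqueNum G
  refine ⟨X, hX, hcard, ?_⟩
  by_contra! hfree
  exact (hX.card_lt_twinFreeCliqueNum hc hfree).ne hcard

end Universal

section Join

variable {a b : V} {x y : W}

@[simp] lemma joinGraph_adj_inl_inl : (joinGraph G H).Adj (.inl a) (.inl b) ↔ G.Adj a b := .rfl
@[simp] lemma joinGraph_adj_inr_inr : (joinGraph G H).Adj (.inr x) (.inr y) ↔ H.Adj x y := .rfl
@[simp] lemma joinGraph_adj_inl_inr : (joinGraph G H).Adj (.inl a) (.inr x) := trivial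
@[simp] lemma joinGraph_adj_inr_inl : (joinGraph G H).Adj (.inr x) (.inl a) := trivial

lemma SimpleGraph.IsUniversal.joinGraph_inl (ha : G.IsUniversal a) :
    (joinGraph G H).IsUniversal (.inl a) := by
  rintro (b | x) hb
  · exact ha (fun h => hb (congrArg _ h))
  · trivial

lemma closedNbhd_joinGraph_inl_eq_inl :
    closedNbhd (joinGraph G H) (.inl a) = closedNbhd (joinGraph G H) (.inl b) ↔
      closedNbhd G a = closedNbhd G b := by
  simp [closedNbhd, Set.ext_iff]

lemma closedNbhd_joinGraph_inr_eq_inr :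
    closedNbhd (joinGraph G H) (.inr x) = closedNbhd (joinGraph G H) (.inr y) ↔
      closedNbhd H x = closedNbhd H y := by
  simp [closedNbhd, Set.ext_iff]

lemma closedNbhd_joinGraph_inl_eq_inr :
    closedNbhd (joinGraph G H) (.inl a) = closedNbhd (joinGraph G H) (.inr x) ↔
      G.IsUniversal a ∧ H.IsUniversal x := by
  simp [closedNbhd, Set.ext_iff, ← insert_neighborSet_eq_univ]

lemma isTwinFreeClique_joinGraph_iff {X : Finset (V ⊕ W)} :
    IsTwinFreeClique (joinGraph G H) X ↔
      IsTwinFreeClique G X.toLeft ∧ IsTwinFreeClique H X.toRight ∧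
        ∀ a ∈ X.toLeft, ∀ x ∈ X.toRight, ¬(G.IsUniversal a ∧ H.IsUniversal x) := by
  have hcross : ∀ a x, closedNbhd (joinGraph G H) (.inr x) = closedNbhd (joinGraph G H) (.inl a) ↔
      G.IsUniversal a ∧ H.IsUniversal x := fun a x => eq_comm.trans closedNbhd_joinGraph_inl_eq_inr
  simp only [IsTwinFreeClique, isClique_iff, Set.Pairwise, Sum.forall, Finset.mem_coe,
    ← Finset.mem_toLeft, ← Finset.mem_toRight, ne_eq, Sum.inl.injEq, Sum.inr.injEq,
    reduceCtorEq, not_false_eq_true, joinGraph_adj_inl_inl, joinGraph_adj_inr_inr,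
    joinGraph_adj_inl_inr, joinGraph_adj_inr_inl, closedNbhd_joinGraph_inl_eq_inl,
    closedNbhd_joinGraph_inr_eq_inr, closedNbhd_joinGraph_inl_eq_inr, hcross]
  grind

lemma twinFreeCliqueNum_joinGraph [Fintype V] [Fintype W] {c : V} {d : W}
    (hc : G.IsUniversal c) (hd : H.IsUniversal d) :
    twinFreeCliqueNum (joinGraph G H) + 1 = twinFreeCliqueNum G + twinFreeCliqueNum H := by
  classical
  apply le_antisymm
  · obtain ⟨X, hX, hXcard⟩ := exists_isTwinFreeClique_card_eq_twinFreeCliqueNum (joinGraph G H)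
    obtain ⟨hL, hR, hcross⟩ := isTwinFreeClique_joinGraph_iff.1 hX
    rw [← hXcard, ← X.card_toLeft_add_card_toRight]
    by_cases hleft : ∃ a ∈ X.toLeft, G.IsUniversal a
    · obtain ⟨a, ha, hua⟩ := hleft
      have := hL.card_le
      have := hR.card_lt_twinFreeCliqueNum hd fun x hx hux => hcross a ha x hx ⟨hua, hux⟩
      omega
    · have := hL.card_lt_twinFreeCliqueNum hc fun a ha hua => hleft ⟨a, ha, hua⟩
      have := hR.card_le
      omega
  · obtain ⟨X₁, hX₁, hX₁card⟩ := exists_isTwinFreeClique_card_eq_twinFreeCliqueNum G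
    obtain ⟨X₂, hX₂, hX₂card, v, hvX, hv⟩ :=
      exists_isTwinFreeClique_card_eq_twinFreeCliqueNum_of_isUniversal hd
    have hfree : ∀ x ∈ X₂.erase v, ¬H.IsUniversal x := fun x hx hux =>
      hX₂.2 x (X₂.mem_of_mem_erase hx) v hvX (X₂.ne_of_mem_erase hx)
        ((closedNbhd_eq_univ_iff.2 hux).trans (closedNbhd_eq_univ_iff.2 hv).symm)
    have hY : IsTwinFreeClique (joinGraph G H) (X₁.disjSum (X₂.erase v)) := by
      rw [isTwinFreeClique_joinGraph_iff, Finset.toLeft_disjSum, Finset.toRight_disjSum]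
      exact ⟨hX₁, hX₂.subset (X₂.erase_subset v), fun a _ x hx h => hfree x hx h.2⟩
    have := hY.card_le
    rw [Finset.card_disjSum, Finset.card_erase_of_mem hvX] at this
    have : 0 < X₂.card := Finset.card_pos.2 ⟨v, hvX⟩
    omega

end Join

end StrongMetricDimension

theorem strongDim_join_of_dominant_general {V W : Type*} [Fintype V] [Fintype W]
    (G : SimpleGraph V) (H : SimpleGraph W) [DecidableRel G.Adj] [DecidableRel H.Adj]
    (hn1 : 2 ≤ Fintype.card V) (hn2 : 2 ≤ Fintype.card W)
    (hd1 : G.maxDegree = Fintype.card V - 1) (hd2 : H.maxDegree = Fintype.card W - 1) :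
    strongDim (joinGraph G H) = strongDim G + strongDim H + 1 := by
  have : Nonempty V := Fintype.card_pos_iff.1 (by omega)
  have : Nonempty W := Fintype.card_pos_iff.1 (by omega)
  obtain ⟨c, hc⟩ := exists_isUniversal_of_maxDegree_eq hd1
  obtain ⟨d, hd⟩ := exists_isUniversal_of_maxDegree_eq hd2
  have hJ := strongDim_add_twinFreeCliqueNum (hc.joinGraph_inl (H := H)).ediam_le_two
  have hG := strongDim_add_twinFreeCliqueNum hc.ediam_le_two
  have hH := strongDim_add_twinFreeCliqueNum hd.ediam_le_two
  have htfc := twinFreeCliqueNum_joinGraph hc hd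
  rw [Fintype.card_sum] at hJ
  omega

/-- If `G`, `H` are connected graphs of order `n₁, n₂ ≥ 2` with maximum
degrees `Δ₁ = n₁ − 1` and `Δ₂ = n₂ − 1`, then
`dim_s(G + H) = dim_s(G) + dim_s(H) + 1`. -/
theorem strongDim_join_of_dominant {V W : Type*} [Fintype V] [Fintype W]
    (G : SimpleGraph V) (H : SimpleGraph W) [DecidableRel G.Adj] [DecidableRel H.Adj]
    (hG : G.Connected) (hH : H.Connected)
    (hn1 : 2 ≤ Fintype.card V) (hn2 : 2 ≤ Fintype.card W)
    (hd1 : G.maxDegree = Fintype.card V - 1) (hd2 : H.maxDegree = Fintype.card W - 1) :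
    strongDim (joinGraph G H) = strongDim G + strongDim H + 1 :=
  strongDim_join_of_dominant_general G H hn1 hn2 hd1 hd2
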